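/- Let (Ω, μ) be a measure space, θ₀ ∈ ℝ^m, k ∈ {1,…,m}, α > 0, and F : ℝ^m × Ω → ℝ. Denote by S = {θ₀ + t·e_k : t ∈ [0, α]} the segment from θ₀ in the k-th coordinate direction. Assume: (i) F(θ, ·) is μ-integrable for every θ ∈ S; (ii) for μ-almost every ω, the map θ ↦ F(θ, ω) is continuous on S and, except at a countable set β(ω) ⊆ S of points not containing θ₀, has a partial derivative ∂F/∂θ^k(θ, ω) at every θ ∈ S; (iii) the function ω ↦ sup_{θ ∈ S ∖ β(ω)} |∂F/∂θ^k(θ, ω)| is μ-integrable. Then the (right) partial derivative of θ ↦ ∫_Ω F(θ, ω) dμ(ω) in the direction e_k exists at θ₀ and equals ∫_Ω ∂F/∂θ^k(θ₀, ω) dμ(ω). -/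

import Mathlib

/-!
For a.e. `ω`, Dieudonné's mean value inequality (for continuous functions differentiable off a
countable set) bounds the difference quotients `(F (θ₀ + t e_k) ω - F θ₀ ω) / t`, `0 < t ≤ α`,
by `g ω`. Dominated convergence then passes the limit `t → 0⁺` under the integral.
-/

open MeasureTheory Set Filter Topology

section MeanValue

variable {f f' : ℝ → ℝ} {a b C : ℝ} {s : Set ℝ}

theorem image_le_of_deriv_right_neg_off_countable (hs : s.Countable)
    (hf : ContinuousOn f (Icc a b))
    (hf' : ∀ x ∈ Ico a b \ s, HasDerivWithinAt f (f' x) (Ici x) x)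
    (hneg : ∀ x ∈ Ico a b \ s, f' x < 0) : ∀ ⦃x⦄, x ∈ Icc a b → f x ≤ f a := by
  intro x hx
  by_contra! hlt
  -- Fence `f` by `f a + δ` with `δ` outside the countable set of values `f - f a` takes on `s`:
  -- then `f` can only touch the fence at points where its right derivative is negative.
  obtain ⟨δ, hδs, hδ, hδx⟩ :=
    ((hs.image fun y => f y - f a).dense_compl ℝ).exists_between (sub_pos.2 hlt)
  have hfence : Icc a b ⊆ f ⁻¹' Iic (f a + δ) := by
    refine IsClosed.Icc_subset_of_forall_exists_gt ?_ (by simp [hδ.le]) ?_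
    · rw [inter_comm]
      exact hf.preimage_isClosed_of_isClosed isClosed_Icc isClosed_Iic
    rintro y ⟨hyδ, hy⟩ z hz
    suffices ∀ᶠ w in 𝓝[>] y, f w ≤ f a + δ from (this.and (Ioc_mem_nhdsGT hz)).exists
    rcases (show f y ≤ f a + δ from hyδ).lt_or_eq with hyδ | hyδ
    · have hcont : ContinuousWithinAt f (Ioi y) y :=
        (hf y (Ico_subset_Icc_self hy)).mono_of_mem_nhdsWithin (Icc_mem_nhdsGT_of_mem hy)
      exact (hcont.eventually (gt_mem_nhds hyδ)).mono fun w hw => hw.le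
    · have hys : y ∉ s := fun hys => hδs ⟨y, hys, by simp [hyδ]⟩
      have hslope : ∀ᶠ w in 𝓝[>] y, slope f y w < 0 :=
        (hasDerivWithinAt_iff_tendsto_slope' (lt_irrefl y)).1 (hf' y ⟨hy, hys⟩).Ioi_of_Ici
          (Iio_mem_nhds (hneg y ⟨hy, hys⟩))
      filter_upwards [hslope, self_mem_nhdsWithin] with w hw hyw
      rw [slope_def_field, div_neg_iff] at hw
      have : y < w := hyw
      rcases hw with h | h <;> linarith [h.1, h.2]
  linarith [show f x ≤ f a + δ from hfence hx]

theorem image_sub_le_mul_sub_of_deriv_right_le_off_countable (hs : s.Countable) (hab : a ≤ b)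
    (hf : ContinuousOn f (Icc a b))
    (hf' : ∀ x ∈ Ico a b \ s, HasDerivWithinAt f (f' x) (Ici x) x)
    (hC : ∀ x ∈ Ico a b \ s, f' x ≤ C) : f b - f a ≤ C * (b - a) := by
  have hbound : ∀ ε > 0, f b - f a ≤ (C + ε) * (b - a) := by
    intro ε hε
    have hg' : ∀ x ∈ Ico a b \ s,
        HasDerivWithinAt (fun y => f y - (C + ε) * y) (f' x - (C + ε)) (Ici x) x := by
      intro x hx
      have := (hf' x hx).sub ((hasDerivWithinAt_id x _).const_mul (C + ε))
      rwa [mul_one] at this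
    have : f b - (C + ε) * b ≤ f a - (C + ε) * a :=
      image_le_of_deriv_right_neg_off_countable hs
        (hf.sub (continuousOn_const.mul continuousOn_id)) hg'
        (fun x hx => by linarith [hC x hx]) ⟨hab, le_rfl⟩
    linarith
  rcases hab.eq_or_lt with rfl | hab
  · simp
  rw [← div_le_iff₀ (sub_pos.2 hab)]
  exact le_of_forall_pos_le_add fun ε hε => (div_le_iff₀ (sub_pos.2 hab)).2 (hbound ε hε)

theorem abs_image_sub_le_mul_sub_of_abs_deriv_right_le_off_countable (hs : s.Countable)
    (hab : a ≤ b) (hf : ContinuousOn f (Icc a b))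
    (hf' : ∀ x ∈ Ico a b \ s, HasDerivWithinAt f (f' x) (Ici x) x)
    (hC : ∀ x ∈ Ico a b \ s, |f' x| ≤ C) : |f b - f a| ≤ C * (b - a) := by
  have hle := image_sub_le_mul_sub_of_deriv_right_le_off_countable hs hab hf hf'
    fun x hx => (abs_le.1 (hC x hx)).2
  have hge := image_sub_le_mul_sub_of_deriv_right_le_off_countable (f := -f) (f' := -f') hs hab
    hf.neg (fun x hx => (hf' x hx).neg) fun x hx => neg_le.1 (abs_le.1 (hC x hx)).1
  simp only [Pi.neg_apply] at hge
  exact abs_le.2 ⟨by linarith, hle⟩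

end MeanValue

theorem HasLineDerivAt.hasDerivAt_add_smul {𝕜 E F : Type*} [NontriviallyNormedField 𝕜]
    [NormedAddCommGroup E] [NormedSpace 𝕜 E] [NormedAddCommGroup F] [NormedSpace 𝕜 F]
    {f : E → F} {f' : F} {x v : E} {s : 𝕜} (h : HasLineDerivAt 𝕜 f f' (x + s • v) v) :
    HasDerivAt (fun t => f (x + t • v)) f' s := by
  have h₀ : HasDerivAt (fun t => f (x + s • v + t • v)) f' (s - s) := by rwa [sub_self]
  have := h₀.comp_sub_const s s
  convert this using 2 with t
  simp only [sub_smul]; abel_nf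

section DominatedSlope

variable {Ω E : Type*} [MeasurableSpace Ω] {μ : Measure Ω} [NormedAddCommGroup E]
  [NormedSpace ℝ E]

theorem hasDerivWithinAt_integral_of_dominated_slope_Ici {φ : ℝ → Ω → E} {φ' : Ω → E}
    {g : Ω → ℝ} {a b : ℝ} (hab : a < b) (hint : ∀ t ∈ Icc a b, Integrable (φ t) μ)
    (hlip : ∀ᵐ ω ∂μ, ∀ t ∈ Icc a b, ‖φ t ω - φ a ω‖ ≤ g ω * (t - a)) (hg : Integrable g μ)
    (hderiv : ∀ᵐ ω ∂μ, HasDerivWithinAt (φ · ω) (φ' ω) (Ici a) a) :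
    HasDerivWithinAt (fun t => ∫ ω, φ t ω ∂μ) (∫ ω, φ' ω ∂μ) (Ici a) a := by
  have ha : a ∈ Icc a b := left_mem_Icc.2 hab.le
  have hslope : ∀ t ∈ Ioc a b,
      ∫ ω, slope (φ · ω) a t ∂μ = slope (fun t => ∫ ω, φ t ω ∂μ) a t := by
    intro t ht
    simp only [slope_def_module]
    rw [integral_smul, integral_sub (hint t (Ioc_subset_Icc_self ht)) (hint a ha)]
  rw [hasDerivWithinAt_iff_tendsto_slope, Ici_sdiff_left]
  refine Tendsto.congr' (eventually_of_mem (Ioc_mem_nhdsGT hab) hslope) ?_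
  refine tendsto_integral_filter_of_dominated_convergence g ?_ ?_ hg ?_
  · filter_upwards [Ioc_mem_nhdsGT hab] with t ht
    simp only [slope_def_module]
    exact ((hint t (Ioc_subset_Icc_self ht)).sub (hint a ha)).aestronglyMeasurable.const_smul _
  · filter_upwards [Ioc_mem_nhdsGT hab] with t ht
    filter_upwards [hlip] with ω hω
    have hta : 0 < t - a := sub_pos.2 ht.1
    rw [slope_def_module, norm_smul, norm_inv, Real.norm_of_nonneg hta.le, inv_mul_le_iff₀ hta,
      mul_comm]
    exact hω t (Ioc_subset_Icc_self ht)
  · filter_upwards [hderiv] with ω hω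
    simpa only [Ici_sdiff_left] using hasDerivWithinAt_iff_tendsto_slope.1 hω

end DominatedSlope

theorem stmt_2
    (m : ℕ) {Ω : Type*} [MeasurableSpace Ω] (μ : Measure Ω)
    (θ₀ : EuclideanSpace ℝ (Fin m)) (k : Fin m) (α : ℝ) (hα : 0 < α)
    (F D : EuclideanSpace ℝ (Fin m) → Ω → ℝ)
    (β : Ω → Set (EuclideanSpace ℝ (Fin m)))
    (S : Set (EuclideanSpace ℝ (Fin m)))
    (hS : S = (fun t : ℝ => θ₀ + t • (EuclideanSpace.single k (1 : ℝ))) '' Set.Icc 0 α)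
    (hFint : ∀ θ ∈ S, Integrable (F θ) μ)
    (hae : ∀ᵐ ω ∂μ, (β ω).Countable ∧ β ω ⊆ S ∧ θ₀ ∉ β ω ∧
      ContinuousOn (fun θ => F θ ω) S ∧
      ∀ θ ∈ S, θ ∉ β ω →
        HasLineDerivAt ℝ (fun θ' => F θ' ω) (D θ ω) θ (EuclideanSpace.single k (1 : ℝ)))
    (g : Ω → ℝ) (hg : Integrable g μ)
    (hbound : ∀ᵐ ω ∂μ, ∀ θ ∈ S, θ ∉ β ω → |D θ ω| ≤ g ω) :
    HasDerivWithinAt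
      (fun t : ℝ => ∫ ω, F (θ₀ + t • (EuclideanSpace.single k (1 : ℝ))) ω ∂μ)
      (∫ ω, D θ₀ ω ∂μ) (Set.Ici (0 : ℝ)) 0 := by
  set v : EuclideanSpace ℝ (Fin m) := EuclideanSpace.single k 1
  set L : ℝ → EuclideanSpace ℝ (Fin m) := fun t => θ₀ + t • v
  have hL : Function.Injective L :=
    (add_right_injective θ₀).comp (smul_left_injective ℝ (by simp [v]))
  have hLS : ∀ t ∈ Icc 0 α, L t ∈ S := fun t ht => hS ▸ mem_image_of_mem L ht
  refine hasDerivWithinAt_integral_of_dominated_slope_Ici hα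
    (fun t ht => hFint _ (hLS t ht)) ?_ hg ?_
  · filter_upwards [hae, hbound] with ω hω hDg t ht
    obtain ⟨hβ, -, -, hcont, hD⟩ := hω
    have hLS' : ∀ x ∈ Icc 0 t, L x ∈ S := fun x hx => hLS x (Icc_subset_Icc_right ht.2 hx)
    have hderiv : ∀ x ∈ Ico 0 t \ L ⁻¹' β ω,
        HasDerivWithinAt (fun s => F (L s) ω) (D (L x) ω) (Ici x) x := fun x hx =>
      (hD _ (hLS' x (Ico_subset_Icc_self hx.1)) hx.2).hasDerivAt_add_smul.hasDerivWithinAt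
    rw [Real.norm_eq_abs]
    exact abs_image_sub_le_mul_sub_of_abs_deriv_right_le_off_countable (hβ.preimage hL) ht.1
      (hcont.comp (continuous_const.add (continuous_id.smul continuous_const)).continuousOn hLS')
      hderiv fun x hx => hDg _ (hLS' x (Ico_subset_Icc_self hx.1)) hx.2
  · filter_upwards [hae] with ω hω
    obtain ⟨-, -, hθ₀, -, hD⟩ := hω
    exact (hD θ₀ (by simpa [L] using hLS 0 (left_mem_Icc.2 hα.le)) hθ₀).hasDerivWithinAt
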